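/- Assume |d| > 2 and n ≥ 2. The quantity g_{n+1}(d) := 1 − f_{n+1}(d) + ∑_{j=1}^{n−1} r_j(d) + r_{n−1}(d)·f_{n−1}(d), where r_j(d) = f_n(d)/(f_j(d)·f_{j+1}(d)), satisfies g_{n+1}(d) = 2 + d·f_n(d) + 2·f_{n−1}(d). -/

import Mathlib

noncomputable def f (d : ℝ) : ℕ → ℝ
  | 0 => 0
  | 1 => 1
  | (i + 2) => -d * f d (i + 1) - f d i

noncomputable def r (d : ℝ) (n j : ℕ) : ℝ := f d n / (f d j * f d (j + 1))

/-!
Cassini's identity `f_{j+2} f_j - f_{j+1}² = -1` makes `1 / (f_j f_{j+1})` telescope: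
`∑_{j=1}^{k} 1 / (f_j f_{j+1}) = f_k / f_{k+1}`. Hence `∑_{j=1}^{n-1} r_j = f_{n-1}`, while
`r_{n-1} f_{n-1} = 1` and `-f_{n+1} = d f_n + f_{n-1}` by the recurrence.
The divisions are genuine because for `|d| ≥ 2` the recurrence gives
`|f_{i+2}| ≥ 2|f_{i+1}| - |f_i| > |f_{i+1}|`, so `|f_i|` increases strictly from `f_0 = 0`.
-/

theorem f_add_two (d : ℝ) (i : ℕ) : f d (i + 2) = -d * f d (i + 1) - f d i := rfl

theorem f_add_two_mul_sub_sq (d : ℝ) (j : ℕ) : f d (j + 2) * f d j - f d (j + 1) ^ 2 = -1 := by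
  induction j with
  | zero => simp [f]
  | succ j ih =>
    rw [f_add_two d (j + 1), f_add_two d j] at *
    linear_combination ih

section

variable {d : ℝ}

theorem abs_f_lt_abs_f_succ (hd : 2 ≤ |d|) (i : ℕ) : |f d i| < |f d (i + 1)| := by
  induction i with
  | zero => simp [f]
  | succ i ih =>
    have htri : |d * f d (i + 1)| ≤ |d * f d (i + 1) + f d i| + |f d i| := by
      simpa using abs_add_le (d * f d (i + 1) + f d i) (-f d i)
    have hrec : |f d (i + 2)| = |d * f d (i + 1) + f d i| := by
      rw [f_add_two, ← abs_neg]
      ring_nf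
    rw [abs_mul] at htri
    rw [hrec]
    nlinarith [abs_nonneg (f d (i + 1))]

theorem f_succ_ne_zero (hd : 2 ≤ |d|) (i : ℕ) : f d (i + 1) ≠ 0 :=
  abs_pos.mp <| (abs_nonneg _).trans_lt (abs_f_lt_abs_f_succ hd i)

variable (hf : ∀ i, f d (i + 1) ≠ 0)
include hf

theorem sum_Icc_inv_f_mul_f_succ (k : ℕ) :
    ∑ j ∈ Finset.Icc 1 k, (f d j * f d (j + 1))⁻¹ = f d k / f d (k + 1) := by
  induction k with
  | zero => simp [f]
  | succ k ih =>
    rw [Finset.sum_Icc_succ_top (by omega), ih]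
    have h1 := hf k
    have h2 := hf (k + 1)
    field_simp
    linear_combination f_add_two_mul_sub_sq d k

theorem sum_Icc_r (n : ℕ) : ∑ j ∈ Finset.Icc 1 (n - 1), r d n j = f d (n - 1) := by
  cases n with
  | zero => simp [f]
  | succ m =>
    simp only [r, div_eq_mul_inv, ← Finset.mul_sum]
    rw [Nat.add_sub_cancel, sum_Icc_inv_f_mul_f_succ hf, mul_div_cancel₀ _ (hf m)]

theorem r_succ_mul_f (j : ℕ) : r d (j + 2) (j + 1) * f d (j + 1) = 1 := by
  have h1 := hf j
  have h2 := hf (j + 1)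
  simp only [r]
  field_simp

end

theorem stmt_7 (d : ℝ) (hd : |d| > 2) (n : ℕ) (hn : 2 ≤ n) :
    1 - f d (n + 1) + (∑ j ∈ Finset.Icc 1 (n - 1), r d n j) +
      r d n (n - 1) * f d (n - 1) =
    2 + d * f d n + 2 * f d (n - 1) := by
  have hf := f_succ_ne_zero hd.le
  obtain ⟨m, rfl⟩ : ∃ m, n = m + 2 := ⟨n - 2, by omega⟩
  rw [sum_Icc_r hf, show m + 2 - 1 = m + 1 from rfl, r_succ_mul_f hf, f_add_two]
  ring
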